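/- Let f(x) = x(1+x)/(1-x), g(x) = 1/(1-x), and φ(x) = (1-x-√(1-6x+x²))/2 over ℚ. Then φ(x)·φ'(x)·g(φ(x))/f(φ(x)) = 1/√(1-6x+x²) as formal power series. -/

import Mathlib

open PowerSeries

/-- Composition `f ∘ a` of formal power series (intended for `a` with zero constant term). -/
noncomputable def psComp {R : Type*} [CommRing R] (f a : R⟦X⟧) : R⟦X⟧ :=
  PowerSeries.mk fun n => ∑ i ∈ Finset.range (n + 1), PowerSeries.coeff i f * PowerSeries.coeff n (a ^ i)

/-!
On series without constant term, `psComp` is Mathlib's substitution `PowerSeries.subst`, a ring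
homomorphism; hence `f(φ) = φ (1 + φ) g(φ)`. Differentiating `s² = 1 - 6X + X²` and
`2φ = 1 - X - s` gives `φ' s = 1 + φ`, which is all that remains.
-/

section Composition

variable {R : Type*} [CommRing R] {a : R⟦X⟧}

lemma coeff_pow_of_constantCoeff_eq_zero (ha : constantCoeff a = 0) {n d : ℕ} (h : n < d) :
    coeff n (a ^ d) = 0 :=
  coeff_of_lt_order n <| (Nat.cast_lt.mpr h).trans_le
    (by simpa using le_order_pow_of_constantCoeff_eq_zero d ha)

lemma psComp_eq_subst (ha : constantCoeff a = 0) (f : R⟦X⟧) : psComp f a = f.subst a := by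
  ext n
  rw [coeff_subst' (HasSubst.of_constantCoeff_zero' ha), finsum_eq_finsetSum_of_support_subset
    (s := Finset.range (n + 1))]
  · simp [psComp]
  · intro d hd
    by_contra hdn
    exact hd (by simp [coeff_pow_of_constantCoeff_eq_zero ha (by simpa using hdn)])

lemma psComp_X_mul_one_add_X_mul (ha : constantCoeff a = 0) (f : R⟦X⟧) :
    psComp (X * (1 + X) * f) a = a * (1 + a) * psComp f a := by
  have hsub := HasSubst.of_constantCoeff_zero' ha
  simp only [psComp_eq_subst ha, ← coe_substAlgHom hsub, map_mul, map_add, map_one,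
    substAlgHom_X]

end Composition

lemma derivative_ofNat {R : Type*} [CommRing R] (n : ℕ) [n.AtLeastTwo] :
    d⁄dX R (ofNat(n) : R⟦X⟧) = 0 :=
  Derivation.map_natCast _ n

lemma derivative_mul_eq_one_add {K : Type*} [Field K] [NeZero (2 : K)] {s φ : K⟦X⟧}
    (hs : s ^ 2 = 1 - 6 * X + X ^ 2) (hφ : 2 * φ = 1 - X - s) :
    d⁄dX K φ * s = 1 + φ := by
  have two_ne_zero' : (2 : K⟦X⟧) ≠ 0 := fun h ↦
    two_ne_zero (α := K) (by simpa [map_ofNat] using congrArg constantCoeff h)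
  have hds : s * d⁄dX K s = X - 3 := by
    have h := congrArg (d⁄dX K) hs
    simp only [pow_two, Derivation.leibniz, map_add, map_sub, Derivation.map_one_eq_zero,
      derivative_X, derivative_ofNat, smul_eq_mul] at h
    refine mul_left_cancel₀ two_ne_zero' ?_
    linear_combination h
  have hdφ : 2 * d⁄dX K φ = -1 - d⁄dX K s := by
    have h := congrArg (d⁄dX K) hφ
    simp only [Derivation.leibniz, map_sub, Derivation.map_one_eq_zero, derivative_X,
      derivative_ofNat, smul_eq_mul] at h
    linear_combination h
  refine mul_left_cancel₀ two_ne_zero' ?_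
  linear_combination s * hdφ - hds - hφ

theorem stmt10 (s φ : ℚ⟦X⟧)
    (hs : s ^ 2 = 1 - 6 * X + X ^ 2) (hs0 : PowerSeries.constantCoeff s = 1)
    (hφ : 2 * φ = 1 - X - s) :
    φ * PowerSeries.derivativeFun φ * psComp ((1 - X : ℚ⟦X⟧)⁻¹) φ * s =
      psComp (X * (1 + X) * (1 - X : ℚ⟦X⟧)⁻¹) φ := by
  have hφ0 : constantCoeff φ = 0 := by
    have h := congrArg constantCoeff hφ
    simp only [map_mul, map_sub, map_one, map_ofNat, constantCoeff_X, hs0] at h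
    linarith
  show φ * d⁄dX ℚ φ * _ * s = _
  rw [psComp_X_mul_one_add_X_mul hφ0, ← derivative_mul_eq_one_add hs hφ]
  ring
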